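/- arXiv:2402.15926 — 8 statements merged into one kernel-verified Lean document; each statement's English description precedes it below -/
import Mathlib

section
/- For the logistic loss ℓ(z) = ln(1 + e^{-z}), for every λ ≥ 1, the function ρ(λ) := min_{z ∈ ℝ} (λ ℓ(z) + z²) satisfies ρ(λ) ≤ 1 + ln²(λ). -/
/-! At `z = ln λ` one has `e^{-z} = 1/λ`, so the objective equals `λ ln(1 + 1/λ) + ln² λ`,
and `λ ln(1 + 1/λ) ≤ 1` because `ln(1 + t) ≤ t`. -/

open Real

lemma mul_log_one_add_inv_le_one {x : ℝ} (hx : 0 < x) : x * log (1 + x⁻¹) ≤ 1 :=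
  calc x * log (1 + x⁻¹) ≤ x * x⁻¹ := by
        gcongr
        linarith [log_le_sub_one_of_pos (by positivity : 0 < 1 + x⁻¹)]
    _ = 1 := mul_inv_cancel₀ hx.ne'

lemma log_one_add_exp_neg_nonneg (z : ℝ) : 0 ≤ log (1 + exp (-z)) :=
  log_nonneg (le_add_of_nonneg_right (exp_pos _).le)

lemma bddBelow_range_mul_log_one_add_exp_neg_add_sq {lam : ℝ} (hlam : 0 ≤ lam) :
    BddBelow (Set.range fun z : ℝ => lam * log (1 + exp (-z)) + z ^ 2) := by
  refine ⟨0, ?_⟩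
  rintro _ ⟨z, rfl⟩
  have := log_one_add_exp_neg_nonneg z
  positivity

/-- For the logistic loss ℓ(z) = ln(1 + e^{-z}), for every λ ≥ 1,
ρ(λ) := min_z (λ ℓ(z) + z²) satisfies ρ(λ) ≤ 1 + ln²(λ). -/
theorem logistic_rho_bound (lam : ℝ) (hlam : 1 ≤ lam) :
    sInf (Set.range fun z : ℝ => lam * Real.log (1 + Real.exp (-z)) + z ^ 2)
      ≤ 1 + (Real.log lam) ^ 2 := by
  have hlam₀ : 0 < lam := by linarith
  calc sInf (Set.range fun z : ℝ => lam * log (1 + exp (-z)) + z ^ 2)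
      ≤ lam * log (1 + exp (-log lam)) + log lam ^ 2 :=
        csInf_le (bddBelow_range_mul_log_one_add_exp_neg_add_sq hlam₀.le) ⟨log lam, rfl⟩
    _ = lam * log (1 + lam⁻¹) + log lam ^ 2 := by rw [exp_neg, exp_log hlam₀]
    _ ≤ 1 + log lam ^ 2 := by linarith [mul_log_one_add_inv_le_one hlam₀]
end

section
/- For the logistic loss, the second-order self-boundedness holds: for all x, z ∈ ℝ with |z - x| ≤ 1, one has ℓ(z) ≤ ℓ(x) + ℓ'(x)(z - x) + (e/2)·|ℓ'(x)|·(z - x)². -/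
open Real

lemma ell_hasDerivAt (t : ℝ) :
    HasDerivAt (fun t : ℝ => Real.log (1 + Real.exp (-t))) (-(1 / (1 + Real.exp t))) t := by
  have h1 : HasDerivAt (fun t : ℝ => 1 + Real.exp (-t)) (-Real.exp (-t)) t := by
    have := (Real.hasDerivAt_exp (-t)).comp t (hasDerivAt_neg t)
    simpa using this.const_add 1
  have hne : (1 : ℝ) + Real.exp (-t) ≠ 0 := by positivity
  have := h1.log hne
  convert this using 1
  rw [Real.exp_neg]
  have h0 : Real.exp t ≠ 0 := (Real.exp_pos t).ne'
  field_simp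
  ring

lemma ell_deriv (t : ℝ) :
    deriv (fun t : ℝ => Real.log (1 + Real.exp (-t))) t = -(1 / (1 + Real.exp t)) :=
  (ell_hasDerivAt t).deriv

lemma fracA (a b e d : ℝ) (ha : 0 < a) (hb : 0 < b) (hnum : b - a ≤ e * d * (1 + b)) :
    1/(1+a) - 1/(1+b) ≤ e * (1/(1+a)) * d := by
  have k1 : 1/(1+a) - 1/(1+b) = (b-a)/((1+a)*(1+b)) := by field_simp <;> ring
  have k2 : e * (1/(1+a)) * d = (e*d*(1+b))/((1+a)*(1+b)) := by field_simp <;> ring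
  rw [k1, k2]
  exact div_le_div_of_nonneg_right hnum (by positivity)

lemma fracB (a b e d : ℝ) (ha : 0 < a) (hb : 0 < b) (hnum : b - a ≤ e * d * (1 + a)) :
    1/(1+a) - 1/(1+b) ≤ e * (1/(1+b)) * d := by
  have k1 : 1/(1+a) - 1/(1+b) = (b-a)/((1+a)*(1+b)) := by field_simp <;> ring
  have k2 : e * (1/(1+b)) * d = (e*d*(1+a))/((1+a)*(1+b)) := by field_simp <;> ring
  rw [k1, k2]
  exact div_le_div_of_nonneg_right hnum (by positivity)

/-- Second-order self-boundedness of the logistic loss: for |z - x| ≤ 1,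
ℓ(z) ≤ ℓ(x) + ℓ'(x)(z-x) + (e/2)|ℓ'(x)|(z-x)². -/
theorem logistic_self_bounded (x z : ℝ) (h : |z - x| ≤ 1) :
    Real.log (1 + Real.exp (-z))
      ≤ Real.log (1 + Real.exp (-x))
        + deriv (fun t : ℝ => Real.log (1 + Real.exp (-t))) x * (z - x)
        + (Real.exp 1 / 2) * |deriv (fun t : ℝ => Real.log (1 + Real.exp (-t))) x|
            * (z - x) ^ 2 := by
  set L : ℝ → ℝ := fun t => Real.log (1 + Real.exp (-t)) with hL
  have hderiv : deriv L x = -(1 / (1 + Real.exp x)) := ell_deriv x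
  set A : ℝ := 1 / (1 + Real.exp x) with hA
  have hApos : 0 < A := by positivity
  rw [hderiv, abs_neg, abs_of_pos hApos]
  set E := Real.exp 1 with hE
  have hE1 : (1:ℝ) ≤ E := by
    have := Real.add_one_le_exp (1:ℝ); linarith
  -- define φ
  set φ : ℝ → ℝ := fun t => L t - L x - (-A) * (t - x) - (E/2) * A * (t - x)^2 with hφ
  have hφx : φ x = 0 := by simp [hφ]
  have hφd : ∀ t : ℝ, HasDerivAt φ (-(1/(1+Real.exp t)) + A - E * A * (t - x)) t := by
    intro t
    have h1 := ell_hasDerivAt t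
    have h2 : HasDerivAt (fun t : ℝ => L x + (-A) * (t - x) + (E/2) * A * (t - x)^2)
        ((-A) + (E/2) * A * (2 * (t - x))) t := by
      have ha : HasDerivAt (fun t : ℝ => t - x) 1 t := (hasDerivAt_id t).sub_const x
      have hb : HasDerivAt (fun t : ℝ => (t - x)^2) (2 * (t - x)) t := by
        simpa using ha.fun_pow 2
      have hc := ((ha.const_mul (-A)).const_add (L x)).add (hb.const_mul ((E/2) * A))
      exact hc.congr_deriv (by ring)
    have : HasDerivAt (fun t => L t - (L x + (-A) * (t - x) + (E/2) * A * (t - x)^2))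
        (-(1/(1+Real.exp t)) - ((-A) + (E/2) * A * (2 * (t - x)))) t := h1.sub h2
    convert this using 1
    · ext t; simp [hφ]; ring
    · ring
  -- key derivative bounds
  have hgoal : φ z ≤ 0 → L z ≤ L x + -A * (z - x) + E / 2 * A * (z - x)^2 := by
    intro hz; have : φ z = L z - L x - (-A)*(z-x) - (E/2)*A*(z-x)^2 := rfl
    linarith [hz.trans_eq rfl, this ▸ hz]
  apply hgoal
  rcases le_total x z with hxz | hxz
  · -- z ≥ x : φ antitone on [x,z]
    have hzb : z - x ≤ 1 := by rw [abs_le] at h; linarith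
    have hmono : AntitoneOn φ (Set.Icc x z) := by
      apply antitoneOn_of_deriv_nonpos (convex_Icc x z)
      · exact fun t _ => ((hφd t).continuousAt).continuousWithinAt
      · exact fun t _ => ((hφd t).differentiableAt).differentiableWithinAt
      · intro t ht
        rw [interior_Icc] at ht
        rw [(hφd t).deriv]
        have h1 : 1/(1+Real.exp x) - 1/(1+Real.exp t) ≤ E * (1/(1+Real.exp x)) * (t - x) := by
          apply fracA _ _ _ _ (Real.exp_pos x) (Real.exp_pos t)
          have hba : Real.exp t - Real.exp x ≤ Real.exp t * (t - x) := by
            have hh := Real.add_one_le_exp (x - t)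
            have he : Real.exp (x - t) * Real.exp t = Real.exp x := by
              rw [← Real.exp_add]; ring_nf
            nlinarith [Real.exp_pos t]
          have hd : 0 ≤ t - x := by linarith [ht.1]
          nlinarith [mul_nonneg (mul_nonneg (sub_nonneg.mpr hE1) hd) (Real.exp_pos t).le,
            mul_nonneg (zero_le_one.trans hE1) hd]
        simp only [hA]
        nlinarith [h1]
    have := hmono (Set.left_mem_Icc.mpr hxz) (Set.right_mem_Icc.mpr hxz) hxz
    linarith [hφx]
  · -- z ≤ x : φ monotone on [z,x]
    have hzb : x - z ≤ 1 := by rw [abs_le] at h; linarith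
    have hmono : MonotoneOn φ (Set.Icc z x) := by
      apply monotoneOn_of_deriv_nonneg (convex_Icc z x)
      · exact fun t _ => ((hφd t).continuousAt).continuousWithinAt
      · exact fun t _ => ((hφd t).differentiableAt).differentiableWithinAt
      · intro t ht
        rw [interior_Icc] at ht
        rw [(hφd t).deriv]
        have hxt1 : x - t ≤ 1 := by linarith [ht.1]
        have h1 : 1/(1+Real.exp t) - 1/(1+Real.exp x) ≤ E * (1/(1+Real.exp x)) * (x - t) := by
          apply fracB _ _ _ _ (Real.exp_pos t) (Real.exp_pos x)
          have hba : Real.exp x - Real.exp t ≤ Real.exp x * (x - t) := by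
            have hh := Real.add_one_le_exp (t - x)
            have he : Real.exp (t - x) * Real.exp x = Real.exp t := by
              rw [← Real.exp_add]; ring_nf
            nlinarith [Real.exp_pos x]
          have hab : Real.exp x ≤ E * Real.exp t := by
            have hh : Real.exp (x - t) ≤ E := by
              rw [hE]; exact Real.exp_le_exp.mpr hxt1
            have he : Real.exp (x - t) * Real.exp t = Real.exp x := by
              rw [← Real.exp_add]; ring_nf
            nlinarith [Real.exp_pos t]
          have hd : 0 ≤ x - t := by linarith [ht.2]
          nlinarith [mul_nonneg (sub_nonneg.mpr hab) hd,
            mul_nonneg (zero_le_one.trans hE1) hd]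
        simp only [hA]
        nlinarith [h1]
    have := hmono (Set.left_mem_Icc.mpr hxz) (Set.right_mem_Icc.mpr hxz) hxz
    linarith [hφx]
end

section
/- For the flattened polynomial loss of degree a > 0, defined as ℓ(z) = (1+z)^{-a} for z > 0 and ℓ(z) = 1 - a z for z ≤ 0, the function ρ(λ) := min_z (λ ℓ(z) + z²) satisfies ρ(λ) ≤ 2 λ^{2/(a+2)} for all λ ≥ 1. -/
/-- For the flattened polynomial loss of degree a > 0,
ρ(λ) = min_z (λ ℓ(z) + z²) ≤ 2 λ^{2/(a+2)} for all λ ≥ 1. -/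
theorem flattened_poly_rho_bound (a : ℝ) (ha : 0 < a) (lam : ℝ) (hlam : 1 ≤ lam) :
    sInf (Set.range fun z : ℝ =>
        lam * (if 0 < z then (1 + z) ^ (-a) else 1 - a * z) + z ^ 2)
      ≤ 2 * lam ^ (2 / (a + 2)) := by
  have hlpos : (0:ℝ) < lam := lt_of_lt_of_le one_pos hlam
  have hbdd : BddBelow (Set.range fun z : ℝ =>
      lam * (if 0 < z then (1 + z) ^ (-a) else 1 - a * z) + z ^ 2) := by
    refine ⟨0, ?_⟩
    rintro y ⟨z, rfl⟩
    simp only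
    split_ifs with hz
    · have h1 : (0:ℝ) < (1 + z) ^ (-a) := Real.rpow_pos_of_pos (by linarith) _
      nlinarith [sq_nonneg z]
    · push_neg at hz
      nlinarith [sq_nonneg z, mul_nonneg ha.le (neg_nonneg.mpr hz)]
  rcases eq_or_lt_of_le hlam with h1 | h1
  · have hle := csInf_le hbdd (Set.mem_range_self (0:ℝ))
    simp only [if_neg (lt_irrefl (0:ℝ))] at hle
    have h2 : lam ^ (2 / (a + 2)) = 1 := by rw [← h1, Real.one_rpow]
    rw [h2]
    have h3 : lam * (1 - a * 0) + (0:ℝ) ^ 2 = 1 := by rw [← h1]; norm_num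
    rw [h3] at hle
    linarith
  · set L : ℝ := lam ^ ((a + 2)⁻¹) with hL
    have hexp : (0:ℝ) < (a + 2)⁻¹ := by positivity
    have hL1 : 1 < L := Real.one_lt_rpow_iff_of_pos hlpos |>.mpr (Or.inl ⟨h1, hexp⟩)
    have hz : (0:ℝ) < L - 1 := by linarith
    have hle := csInf_le hbdd (Set.mem_range_self (L - 1))
    simp only [if_pos hz] at hle
    have hne : a + 2 ≠ 0 := by linarith
    have key : lam * (1 + (L - 1)) ^ (-a) = lam ^ (2 / (a + 2)) := by
      have h1L : 1 + (L - 1) = L := by ring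
      rw [h1L, hL]
      calc lam * (lam ^ ((a + 2)⁻¹)) ^ (-a)
          = lam ^ (1:ℝ) * lam ^ ((a + 2)⁻¹ * (-a)) := by
            rw [Real.rpow_one, ← Real.rpow_mul hlpos.le]
        _ = lam ^ (1 + (a + 2)⁻¹ * (-a)) := (Real.rpow_add hlpos _ _).symm
        _ = lam ^ (2 / (a + 2)) := by congr 1; field_simp; ring
    have hL2 : L ^ 2 = lam ^ (2 / (a + 2)) := by
      rw [hL, ← Real.rpow_natCast (lam ^ ((a + 2)⁻¹)) 2, ← Real.rpow_mul hlpos.le]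
      congr 1
      push_cast
      field_simp
    have hsq : (L - 1) ^ 2 ≤ lam ^ (2 / (a + 2)) := by
      rw [← hL2]; nlinarith
    calc sInf _ ≤ lam * (1 + (L - 1)) ^ (-a) + (L - 1) ^ 2 := hle
      _ ≤ 2 * lam ^ (2 / (a + 2)) := by rw [key]; linarith
end

section
/- For the flattened exponential loss with temperature a > 0, defined by ℓ(z) = e^{-az} for z > 0 and ℓ(z) = 1 - az for z ≤ 0, the function ρ(λ) := min_z (λ ℓ(z) + z²) satisfies ρ(λ) ≤ 1 + ln²(λ)/a² for all λ ≥ 1. -/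
open Real Set

noncomputable section

def flatExpLoss (a z : ℝ) : ℝ :=
  if 0 < z then exp (-(a * z)) else 1 - a * z

theorem flatExpLoss_nonneg {a : ℝ} (ha : 0 ≤ a) (z : ℝ) : 0 ≤ flatExpLoss a z := by
  unfold flatExpLoss
  split_ifs with hz
  · exact (exp_pos _).le
  · nlinarith [mul_nonpos_of_nonneg_of_nonpos ha (not_lt.mp hz)]

theorem flatExpLoss_of_nonneg (a : ℝ) {z : ℝ} (hz : 0 ≤ z) :
    flatExpLoss a z = exp (-(a * z)) := by
  unfold flatExpLoss
  rcases hz.lt_or_eq with hz | rfl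
  · rw [if_pos hz]
  · simp

theorem mul_flatExpLoss_log_div {a lam : ℝ} (ha : 0 < a) (hlam : 1 ≤ lam) :
    lam * flatExpLoss a (log lam / a) = 1 := by
  have hlam0 : 0 < lam := one_pos.trans_le hlam
  rw [flatExpLoss_of_nonneg a (div_nonneg (log_nonneg hlam) ha.le),
    mul_div_cancel₀ _ ha.ne', exp_neg, exp_log hlam0, mul_inv_cancel₀ hlam0.ne']

theorem bddBelow_range_mul_flatExpLoss_add_sq {a lam : ℝ} (ha : 0 ≤ a) (hlam : 0 ≤ lam) :
    BddBelow (range fun z => lam * flatExpLoss a z + z ^ 2) := by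
  refine ⟨0, ?_⟩
  rintro _ ⟨z, rfl⟩
  have := flatExpLoss_nonneg ha z
  positivity

end

/-- For the flattened exponential loss with temperature a > 0,
ρ(λ) = min_z (λ ℓ(z) + z²) ≤ 1 + ln²(λ)/a² for all λ ≥ 1. -/
theorem flattened_exp_rho_bound (a : ℝ) (ha : 0 < a) (lam : ℝ) (hlam : 1 ≤ lam) :
    sInf (Set.range fun z : ℝ =>
        lam * (if 0 < z then Real.exp (-(a * z)) else 1 - a * z) + z ^ 2)
      ≤ 1 + (Real.log lam) ^ 2 / a ^ 2 := by
  change ⨅ z, lam * flatExpLoss a z + z ^ 2 ≤ _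
  calc ⨅ z, lam * flatExpLoss a z + z ^ 2
      ≤ lam * flatExpLoss a (log lam / a) + (log lam / a) ^ 2 :=
        ciInf_le (bddBelow_range_mul_flatExpLoss_add_sq ha.le (zero_le_one.trans hlam)) _
    _ = 1 + log lam ^ 2 / a ^ 2 := by rw [mul_flatExpLoss_log_div ha hlam, div_pow]
end

section
/- (Split optimization bound for GD on separable logistic regression.) Consider gradient descent iterates w_{t+1} = w_t − η ∇L(w_t) with arbitrary stepsize η > 0, where L(w) = (1/n) Σᵢ ln(1 + exp(−xᵢᵀw)) with ‖xᵢ‖ ≤ 1 and ⟨xᵢ, w*⟩ ≥ γ for a unit vector w* and margin γ > 0. Then for any u₁ ∈ ℝᵈ, setting u = u₁ + (η/(2γ)) w*, one has for every t ≥ 1: ‖w_t − u‖²/(2ηt) + (1/t) Σ_{k=0}^{t−1} L(w_k) ≤ L(u₁) + ‖w₀ − u‖²/(2ηt). -/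
open Finset
open scoped RealInnerProductSpace

/-- The average logistic loss L(w) = (1/n) Σᵢ ln(1 + exp(−⟨xᵢ, w⟩)). -/
noncomputable def logisticRisk {d n : ℕ} (x : Fin n → EuclideanSpace ℝ (Fin d))
    (w : EuclideanSpace ℝ (Fin d)) : ℝ :=
  (1 / n) * ∑ i, Real.log (1 + Real.exp (-(inner ℝ (x i) w : ℝ)))

/-- The gradient ∇L(w) = (1/n) Σᵢ ℓ'(⟨xᵢ,w⟩) xᵢ with ℓ'(s) = −1/(1+eˢ). -/
noncomputable def logisticGrad {d n : ℕ} (x : Fin n → EuclideanSpace ℝ (Fin d))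
    (w : EuclideanSpace ℝ (Fin d)) : EuclideanSpace ℝ (Fin d) :=
  (n : ℝ)⁻¹ • ∑ i, (-(1 + Real.exp ((inner ℝ (x i) w : ℝ)))⁻¹) • x i


lemma logistic_hasDerivAt (z : ℝ) :
    HasDerivAt (fun z => Real.log (1 + Real.exp (-z))) (-(1 + Real.exp z)⁻¹) z := by
  have h1 : HasDerivAt (fun z : ℝ => -z) (-1) z := (hasDerivAt_id z).neg
  have h2 : HasDerivAt (fun z : ℝ => Real.exp (-z)) (Real.exp (-z) * (-1)) z :=
    (Real.hasDerivAt_exp (-z)).comp z h1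
  have h3 : HasDerivAt (fun z : ℝ => 1 + Real.exp (-z)) (Real.exp (-z) * (-1)) z :=
    by exact h2.const_add 1
  have hpos : (0:ℝ) < 1 + Real.exp (-z) := by positivity
  have h4 := (Real.hasDerivAt_log (ne_of_gt hpos)).comp z h3
  refine HasDerivAt.congr_deriv h4 ?_
  rw [Real.exp_neg]
  have he := Real.exp_pos z
  field_simp
  ring

lemma logistic_deriv_mono {a b : ℝ} (hab : a ≤ b) :
    -(1 + Real.exp a)⁻¹ ≤ -(1 + Real.exp b)⁻¹ := by
  have h1 : (0:ℝ) < 1 + Real.exp a := by positivity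
  have h2 : 1 + Real.exp a ≤ 1 + Real.exp b := by
    have := Real.exp_le_exp.mpr hab; linarith
  have := inv_anti₀ h1 h2
  linarith

lemma logistic_tangent' (a b : ℝ) :
    Real.log (1 + Real.exp (-a)) - Real.log (1 + Real.exp (-b))
      ≤ (-(1 + Real.exp a)⁻¹) * (a - b) := by
  set f : ℝ → ℝ := fun z => Real.log (1 + Real.exp (-z)) with hf
  set f' : ℝ → ℝ := fun z => -(1 + Real.exp z)⁻¹ with hf'
  have hder : ∀ z : ℝ, HasDerivAt f (f' z) z := fun z => logistic_hasDerivAt z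
  have hcont : Continuous f := by
    apply continuous_iff_continuousAt.mpr
    exact fun z => (hder z).continuousAt
  rcases lt_trichotomy a b with h | h | h
  · obtain ⟨c, hc, hc'⟩ := exists_hasDerivAt_eq_slope f f' h hcont.continuousOn
      (fun z _ => hder z)
    have hmono : f' a ≤ f' c := logistic_deriv_mono (le_of_lt hc.1)
    rw [hc'] at hmono
    have hba : (0:ℝ) < b - a := by linarith
    have := (le_div_iff₀ hba).mp hmono
    have hring : f' a * (a - b) = -(f' a * (b - a)) := by ring
    show f a - f b ≤ f' a * (a - b)
    rw [hring]; linarith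
  · subst h; simp
  · obtain ⟨c, hc, hc'⟩ := exists_hasDerivAt_eq_slope f f' h hcont.continuousOn
      (fun z _ => hder z)
    have hmono : f' c ≤ f' a := logistic_deriv_mono (le_of_lt hc.2)
    rw [hc'] at hmono
    have hba : (0:ℝ) < a - b := by linarith
    have := (div_le_iff₀ hba).mp hmono
    show f a - f b ≤ f' a * (a - b)
    linarith

lemma grad_inner {d n : ℕ} (x : Fin n → EuclideanSpace ℝ (Fin d))
    (w v : EuclideanSpace ℝ (Fin d)) :
    (inner ℝ (logisticGrad x w) v : ℝ)
      = (n : ℝ)⁻¹ * ∑ i, (-(1 + Real.exp ((inner ℝ (x i) w : ℝ)))⁻¹) * (inner ℝ (x i) v : ℝ) := by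
  unfold logisticGrad
  rw [real_inner_smul_left, sum_inner]
  congr 1
  exact Finset.sum_congr rfl fun i _ => real_inner_smul_left _ _ _

lemma grad_norm_le {d n : ℕ} (x : Fin n → EuclideanSpace ℝ (Fin d)) (hx : ∀ i, ‖x i‖ ≤ 1)
    (w : EuclideanSpace ℝ (Fin d)) :
    ‖logisticGrad x w‖ ≤ (n : ℝ)⁻¹ * ∑ i, (1 + Real.exp ((inner ℝ (x i) w : ℝ)))⁻¹ := by
  unfold logisticGrad
  rw [norm_smul]
  have h1 : ‖∑ i, (-(1 + Real.exp ((inner ℝ (x i) w : ℝ)))⁻¹) • x i‖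
      ≤ ∑ i, (1 + Real.exp ((inner ℝ (x i) w : ℝ)))⁻¹ := by
    refine (norm_sum_le _ _).trans (Finset.sum_le_sum fun i _ => ?_)
    rw [norm_smul]
    have hpos : (0:ℝ) < 1 + Real.exp ((inner ℝ (x i) w : ℝ)) := by positivity
    have : ‖(-(1 + Real.exp ((inner ℝ (x i) w : ℝ)))⁻¹)‖ = (1 + Real.exp ((inner ℝ (x i) w : ℝ)))⁻¹ := by
      rw [norm_neg, Real.norm_eq_abs, abs_of_pos (by positivity)]
    rw [this]
    calc (1 + Real.exp ((inner ℝ (x i) w : ℝ)))⁻¹ * ‖x i‖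
        ≤ (1 + Real.exp ((inner ℝ (x i) w : ℝ)))⁻¹ * 1 := by
          apply mul_le_mul_of_nonneg_left (hx i) (by positivity)
      _ = _ := mul_one _
  have h2 : ‖(n:ℝ)⁻¹‖ = (n:ℝ)⁻¹ := by
    rw [Real.norm_eq_abs, abs_of_nonneg (by positivity)]
  rw [h2]
  exact mul_le_mul_of_nonneg_left h1 (by positivity)


lemma gd_step {d n : ℕ} (hn : 0 < n)
    (x : Fin n → EuclideanSpace ℝ (Fin d)) (hx : ∀ i, ‖x i‖ ≤ 1)
    (γ : ℝ) (hγ : 0 < γ) (wstar : EuclideanSpace ℝ (Fin d)) (hws : ‖wstar‖ = 1)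
    (hmargin : ∀ i, γ ≤ (inner ℝ (x i) wstar : ℝ))
    (η : ℝ) (hη : 0 < η) (wk u₁ : EuclideanSpace ℝ (Fin d)) :
    ‖(wk - η • logisticGrad x wk) - (u₁ + (η / (2 * γ)) • wstar)‖ ^ 2
      ≤ ‖wk - (u₁ + (η / (2 * γ)) • wstar)‖ ^ 2
        - 2 * η * (logisticRisk x wk - logisticRisk x u₁) := by
  set g := logisticGrad x wk with hg
  set u := u₁ + (η / (2 * γ)) • wstar with hu
  have hnR : (0:ℝ) < (n:ℝ) := by exact_mod_cast hn
  have hexp : ‖(wk - η • g) - u‖ ^ 2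
      = ‖wk - u‖ ^ 2 - 2 * η * (inner ℝ g (wk - u) : ℝ) + η ^ 2 * ‖g‖ ^ 2 := by
    have h0 : (wk - η • g) - u = (wk - u) - η • g := by abel
    rw [h0, @norm_sub_sq_real, real_inner_smul_right, norm_smul, Real.norm_eq_abs,
      abs_of_pos hη, mul_pow, real_inner_comm]
    ring
  have hconv : logisticRisk x wk - logisticRisk x u₁ ≤ (inner ℝ g (wk - u₁) : ℝ) := by
    rw [hg, grad_inner]
    unfold logisticRisk
    rw [← mul_sub, ← Finset.sum_sub_distrib, one_div]
    apply mul_le_mul_of_nonneg_left _ (by positivity)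
    apply Finset.sum_le_sum
    intro i _
    have h := logistic_tangent' ((inner ℝ (x i) wk : ℝ)) ((inner ℝ (x i) u₁ : ℝ))
    rw [inner_sub_right]
    exact h
  set S : ℝ := (n : ℝ)⁻¹ * ∑ i, (1 + Real.exp ((inner ℝ (x i) wk : ℝ)))⁻¹ with hS
  have hSnn : 0 ≤ S := by positivity
  have hgnorm : ‖g‖ ≤ S := grad_norm_le x hx wk
  have hS1 : S ≤ 1 := by
    rw [hS]
    have hsum : ∑ i, (1 + Real.exp ((inner ℝ (x i) wk : ℝ)))⁻¹ ≤ (n:ℝ) := by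
      calc ∑ i, (1 + Real.exp ((inner ℝ (x i) wk : ℝ)))⁻¹
          ≤ ∑ _i : Fin n, (1:ℝ) := by
            apply Finset.sum_le_sum
            intro i _
            rw [inv_le_one_iff₀]
            right
            have := Real.exp_pos ((inner ℝ (x i) wk : ℝ))
            linarith
        _ = (n:ℝ) := by simp
    calc (n:ℝ)⁻¹ * ∑ i, (1 + Real.exp ((inner ℝ (x i) wk : ℝ)))⁻¹
        ≤ (n:ℝ)⁻¹ * (n:ℝ) := mul_le_mul_of_nonneg_left hsum (by positivity)
      _ = 1 := by field_simp
  have hmarg : (inner ℝ g wstar : ℝ) ≤ -γ * S := by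
    rw [hg, grad_inner]
    have hterm : ∑ i, (-(1 + Real.exp ((inner ℝ (x i) wk : ℝ)))⁻¹) * (inner ℝ (x i) wstar : ℝ)
        ≤ ∑ i, (-γ) * (1 + Real.exp ((inner ℝ (x i) wk : ℝ)))⁻¹ := by
      apply Finset.sum_le_sum
      intro i _
      have hm := hmargin i
      have hc : (0:ℝ) < (1 + Real.exp ((inner ℝ (x i) wk : ℝ)))⁻¹ := by positivity
      nlinarith
    calc (n:ℝ)⁻¹ * ∑ i, (-(1 + Real.exp ((inner ℝ (x i) wk : ℝ)))⁻¹) * (inner ℝ (x i) wstar : ℝ)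
        ≤ (n:ℝ)⁻¹ * ∑ i, (-γ) * (1 + Real.exp ((inner ℝ (x i) wk : ℝ)))⁻¹ :=
          mul_le_mul_of_nonneg_left hterm (by positivity)
      _ = -γ * S := by rw [hS, ← Finset.mul_sum]; ring
  have hinner_split : (inner ℝ g (wk - u) : ℝ)
      = (inner ℝ g (wk - u₁) : ℝ) - (η / (2 * γ)) * (inner ℝ g wstar : ℝ) := by
    rw [hu]
    have : wk - (u₁ + (η / (2 * γ)) • wstar) = (wk - u₁) - (η / (2 * γ)) • wstar := by abel
    rw [this, inner_sub_right, real_inner_smul_right]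
  have hkey : logisticRisk x wk - logisticRisk x u₁ + (η/2) * ‖g‖^2
      ≤ (inner ℝ g (wk - u) : ℝ) := by
    rw [hinner_split]
    have h1 : -(η / (2 * γ)) * (inner ℝ g wstar : ℝ) ≥ (η/2) * S := by
      have hcoef : 0 < η / (2 * γ) := by positivity
      have := mul_le_mul_of_nonneg_left hmarg (le_of_lt hcoef)
      have heq : η / (2 * γ) * (-γ * S) = -((η/2) * S) := by field_simp
      linarith [heq ▸ this]
    have h2 : ‖g‖^2 ≤ S := by
      have hgnn : (0:ℝ) ≤ ‖g‖ := norm_nonneg _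
      nlinarith
    nlinarith
  nlinarith [hexp, hkey, sq_nonneg ‖g‖]

/-- split optimization bound for GD on separable logistic regression. -/
theorem gd_split_optimization_bound {d n : ℕ} (hn : 0 < n)
    (x : Fin n → EuclideanSpace ℝ (Fin d)) (hx : ∀ i, ‖x i‖ ≤ 1)
    (γ : ℝ) (hγ : 0 < γ) (wstar : EuclideanSpace ℝ (Fin d)) (hws : ‖wstar‖ = 1)
    (hmargin : ∀ i, γ ≤ (inner ℝ (x i) wstar : ℝ))
    (η : ℝ) (hη : 0 < η) (w : ℕ → EuclideanSpace ℝ (Fin d))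
    (hgd : ∀ t, w (t + 1) = w t - η • logisticGrad x (w t))
    (u₁ : EuclideanSpace ℝ (Fin d)) (t : ℕ) (ht : 1 ≤ t) :
    ‖w t - (u₁ + (η / (2 * γ)) • wstar)‖ ^ 2 / (2 * η * t)
        + (1 / t) * ∑ k ∈ Finset.range t, logisticRisk x (w k)
      ≤ logisticRisk x u₁
        + ‖w 0 - (u₁ + (η / (2 * γ)) • wstar)‖ ^ 2 / (2 * η * t) := by
  set u := u₁ + (η / (2 * γ)) • wstar with hu
  have htel : ∀ m : ℕ, ‖w m - u‖ ^ 2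
      + 2 * η * ∑ k ∈ Finset.range m, (logisticRisk x (w k) - logisticRisk x u₁)
      ≤ ‖w 0 - u‖ ^ 2 := by
    intro m
    induction m with
    | zero => simp
    | succ m ih =>
      have hstep := gd_step hn x hx γ hγ wstar hws hmargin η hη (w m) u₁
      rw [← hgd m] at hstep
      rw [Finset.sum_range_succ]
      rw [hu] at *
      nlinarith
  have htR : (0:ℝ) < (t:ℝ) := by exact_mod_cast ht
  have h2t : (0:ℝ) < 2 * η * t := by positivity
  have hsum : ∑ k ∈ Finset.range t, (logisticRisk x (w k) - logisticRisk x u₁)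
      = (∑ k ∈ Finset.range t, logisticRisk x (w k)) - t * logisticRisk x u₁ := by
    rw [Finset.sum_sub_distrib, Finset.sum_const, Finset.card_range, nsmul_eq_mul]
  have hkey : ‖w t - u‖ ^ 2 + 2 * η * ∑ k ∈ Finset.range t, logisticRisk x (w k)
      ≤ 2 * η * t * logisticRisk x u₁ + ‖w 0 - u‖ ^ 2 := by
    have := htel t
    rw [hsum] at this
    nlinarith
  calc ‖w t - u‖ ^ 2 / (2 * η * t) + (1 / t) * ∑ k ∈ Finset.range t, logisticRisk x (w k)
      = (‖w t - u‖ ^ 2 + 2 * η * ∑ k ∈ Finset.range t, logisticRisk x (w k)) / (2 * η * t) := by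
        field_simp
    _ ≤ (2 * η * t * logisticRisk x u₁ + ‖w 0 - u‖ ^ 2) / (2 * η * t) := by
        exact div_le_div_of_nonneg_right hkey h2t.le
    _ = logisticRisk x u₁ + ‖w 0 - u‖ ^ 2 / (2 * η * t) := by
        field_simp
end

section
/- (Gradient potential bound via perceptron argument.) For GD on separable logistic regression with w₀ = 0 and stepsize η > 0, define G(w) = (1/n) Σᵢ 1/(1 + exp(xᵢᵀw)). Then (1/t) Σ_{k=0}^{t−1} G(w_k) ≤ ‖w_t − w₀‖/(γηt) ≤ (√2 + 2 ln(γ²ηt) + η)/(γ²ηt) for every t ≥ 1 with γ²ηt ≥ 1. -/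
open Finset

/-- The gradient potential G(w) = (1/n) Σᵢ 1/(1 + exp(⟨xᵢ, w⟩)). -/
noncomputable def gradPotential {d n : ℕ} (x : Fin n → EuclideanSpace ℝ (Fin d))
    (w : EuclideanSpace ℝ (Fin d)) : ℝ :=
  (1 / n) * ∑ i, (1 + Real.exp ((inner ℝ (x i) w : ℝ)))⁻¹

/-- The exponential potential F(w) = (1/n) Σᵢ exp(−⟨xᵢ, w⟩). -/
noncomputable def expPotential {d n : ℕ} (x : Fin n → EuclideanSpace ℝ (Fin d))
    (w : EuclideanSpace ℝ (Fin d)) : ℝ :=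
  (1 / n) * ∑ i, Real.exp (-(inner ℝ (x i) w : ℝ))

/- ### Auxiliary scalar lemmas -/

lemma ell_convex_aux (a b : ℝ) :
    Real.log (1 + Real.exp (-a)) - Real.log (1 + Real.exp (-b))
      ≤ (1 + Real.exp a)⁻¹ * (b - a) := by
  have hea := Real.exp_pos a
  have heb := Real.exp_pos b
  have hena := Real.exp_pos (-a)
  have henb := Real.exp_pos (-b)
  set p : ℝ := (1 + Real.exp a)⁻¹ with hpdef
  have hpa : (0:ℝ) < 1 + Real.exp a := by linarith
  have hp0 : 0 < p := inv_pos.2 hpa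
  have hp1 : p ≤ 1 := by
    rw [hpdef, inv_le_one_iff₀]; right; linarith
  have hconv := convexOn_exp.2 (Set.mem_univ (0:ℝ)) (Set.mem_univ (a - b))
      (by linarith : (0:ℝ) ≤ 1 - p) hp0.le (by ring)
  simp only [smul_eq_mul, mul_zero, zero_add, Real.exp_zero, mul_one] at hconv
  have hkey : (1 - p) * 1 + p * Real.exp (a - b)
      = (1 + Real.exp (-b)) / (1 + Real.exp (-a)) := by
    rw [hpdef, Real.exp_sub, Real.exp_neg a, Real.exp_neg b]
    field_simp
    ring
  rw [mul_one] at hkey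
  have h2 : Real.exp (p * (a - b)) ≤ (1 + Real.exp (-b)) / (1 + Real.exp (-a)) := by
    rw [← hkey]; exact hconv
  have h3 := Real.log_le_log (Real.exp_pos _) h2
  rw [Real.log_exp, Real.log_div (by linarith) (by linarith)] at h3
  nlinarith [h3]

lemma pt_G_le_L_aux (s : ℝ) : (1 + Real.exp s)⁻¹ ≤ Real.log (1 + Real.exp (-s)) := by
  have h1 := Real.exp_pos s
  have h2 := Real.exp_pos (-s)
  have hpos : (0:ℝ) < 1 + Real.exp (-s) := by linarith
  have key := Real.add_one_le_exp (-(1 + Real.exp s)⁻¹)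
  have hid : 1 - (1 + Real.exp s)⁻¹ = (1 + Real.exp (-s))⁻¹ := by
    rw [Real.exp_neg]; field_simp; ring
  have h3 : (1 + Real.exp (-s))⁻¹ ≤ Real.exp (-(1 + Real.exp s)⁻¹) := by
    rw [← hid]; linarith
  have h4 := Real.log_le_log (inv_pos.2 hpos) h3
  rw [Real.log_exp, Real.log_inv] at h4
  linarith

lemma pt_L_le_exp_aux (s : ℝ) : Real.log (1 + Real.exp (-s)) ≤ Real.exp (-s) := by
  have h2 := Real.exp_pos (-s)
  have := Real.log_le_sub_one_of_pos (by linarith : (0:ℝ) < 1 + Real.exp (-s))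
  linarith

lemma pt_L_mono_aux {a b : ℝ} (h : a ≤ b) :
    Real.log (1 + Real.exp (-b)) ≤ Real.exp (-a) := by
  have hb := Real.exp_pos (-b)
  have h1 : Real.log (1 + Real.exp (-b)) ≤ Real.log (1 + Real.exp (-a)) :=
    Real.log_le_log (by linarith) (by linarith [Real.exp_le_exp.2 (neg_le_neg h)])
  exact h1.trans (pt_L_le_exp_aux a)

lemma pt_L_nonneg_aux (s : ℝ) : 0 ≤ Real.log (1 + Real.exp (-s)) := by
  have := Real.exp_pos (-s)
  exact Real.log_nonneg (by linarith)

/- ### Auxiliary vector-level lemmas -/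

lemma inner_logisticGrad_aux {d n : ℕ} (x : Fin n → EuclideanSpace ℝ (Fin d))
    (w v : EuclideanSpace ℝ (Fin d)) :
    (inner ℝ (logisticGrad x w) v : ℝ)
      = (n:ℝ)⁻¹ * ∑ i, (-(1 + Real.exp ((inner ℝ (x i) w : ℝ)))⁻¹) * (inner ℝ (x i) v : ℝ) := by
  simp only [logisticGrad, real_inner_smul_left, sum_inner]

lemma norm_logisticGrad_le_aux {d n : ℕ} (x : Fin n → EuclideanSpace ℝ (Fin d))
    (hx : ∀ i, ‖x i‖ ≤ 1) (w : EuclideanSpace ℝ (Fin d)) :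
    ‖logisticGrad x w‖ ≤ gradPotential x w := by
  have h0 : (0:ℝ) ≤ (n:ℝ)⁻¹ := by positivity
  rw [logisticGrad, gradPotential, norm_smul, Real.norm_eq_abs, abs_of_nonneg h0, one_div]
  gcongr
  calc ‖∑ i, (-(1 + Real.exp ((inner ℝ (x i) w : ℝ)))⁻¹) • x i‖
      ≤ ∑ i, ‖(-(1 + Real.exp ((inner ℝ (x i) w : ℝ)))⁻¹) • x i‖ := norm_sum_le _ _
    _ ≤ ∑ i, (1 + Real.exp ((inner ℝ (x i) w : ℝ)))⁻¹ := by
        apply Finset.sum_le_sum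
        intro i _
        rw [norm_smul, Real.norm_eq_abs, abs_neg, abs_of_nonneg (by positivity)]
        have h1 : (0:ℝ) ≤ (1 + Real.exp ((inner ℝ (x i) w : ℝ)))⁻¹ := by positivity
        nlinarith [hx i, norm_nonneg (x i)]

lemma gradPotential_nonneg_aux {d n : ℕ} (x : Fin n → EuclideanSpace ℝ (Fin d))
    (w : EuclideanSpace ℝ (Fin d)) : 0 ≤ gradPotential x w := by
  rw [gradPotential]
  have : (0:ℝ) ≤ ∑ i : Fin n, (1 + Real.exp ((inner ℝ (x i) w : ℝ)))⁻¹ :=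
    Finset.sum_nonneg fun i _ => by positivity
  positivity

lemma gradPotential_le_one_aux {d n : ℕ} (hn : 0 < n)
    (x : Fin n → EuclideanSpace ℝ (Fin d)) (w : EuclideanSpace ℝ (Fin d)) :
    gradPotential x w ≤ 1 := by
  rw [gradPotential, one_div]
  have hsum : ∑ i : Fin n, (1 + Real.exp ((inner ℝ (x i) w : ℝ)))⁻¹ ≤ (n:ℝ) := by
    calc ∑ i : Fin n, (1 + Real.exp ((inner ℝ (x i) w : ℝ)))⁻¹
        ≤ ∑ _i : Fin n, (1:ℝ) := by
          apply Finset.sum_le_sum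
          intro i _
          have := Real.exp_pos ((inner ℝ (x i) w : ℝ))
          rw [inv_le_one_iff₀]; right; linarith
      _ = (n:ℝ) := by simp
  have hn' : (0:ℝ) < (n:ℝ) := by exact_mod_cast hn
  calc (n:ℝ)⁻¹ * ∑ i : Fin n, (1 + Real.exp ((inner ℝ (x i) w : ℝ)))⁻¹
      ≤ (n:ℝ)⁻¹ * (n:ℝ) := by
        apply mul_le_mul_of_nonneg_left hsum (by positivity)
    _ = 1 := by field_simp

lemma gradPotential_le_risk_aux {d n : ℕ} (x : Fin n → EuclideanSpace ℝ (Fin d))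
    (w : EuclideanSpace ℝ (Fin d)) : gradPotential x w ≤ logisticRisk x w := by
  rw [gradPotential, logisticRisk]
  apply mul_le_mul_of_nonneg_left _ (by positivity)
  exact Finset.sum_le_sum fun i _ => pt_G_le_L_aux _

lemma risk_nonneg_aux {d n : ℕ} (x : Fin n → EuclideanSpace ℝ (Fin d))
    (w : EuclideanSpace ℝ (Fin d)) : 0 ≤ logisticRisk x w := by
  rw [logisticRisk]
  have : (0:ℝ) ≤ ∑ i : Fin n, Real.log (1 + Real.exp (-(inner ℝ (x i) w : ℝ))) :=
    Finset.sum_nonneg fun i _ => pt_L_nonneg_aux _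
  positivity

lemma risk_convex_aux {d n : ℕ} (x : Fin n → EuclideanSpace ℝ (Fin d))
    (w u : EuclideanSpace ℝ (Fin d)) :
    logisticRisk x w - logisticRisk x u ≤ (inner ℝ (logisticGrad x w) (w - u) : ℝ) := by
  rw [inner_logisticGrad_aux, logisticRisk, logisticRisk, one_div, ← mul_sub,
    ← Finset.sum_sub_distrib]
  apply mul_le_mul_of_nonneg_left _ (by positivity)
  apply Finset.sum_le_sum
  intro i _
  have h := ell_convex_aux ((inner ℝ (x i) w : ℝ)) ((inner ℝ (x i) u : ℝ))
  rw [inner_sub_right]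
  ring_nf
  ring_nf at h
  linarith

lemma margin_inner_aux {d n : ℕ} (x : Fin n → EuclideanSpace ℝ (Fin d))
    (γ : ℝ) (wstar : EuclideanSpace ℝ (Fin d))
    (hmargin : ∀ i, γ ≤ (inner ℝ (x i) wstar : ℝ))
    (w : EuclideanSpace ℝ (Fin d)) :
    γ * gradPotential x w ≤ -(inner ℝ (logisticGrad x w) wstar : ℝ) := by
  rw [inner_logisticGrad_aux, gradPotential, one_div, ← mul_neg, ← Finset.sum_neg_distrib,
    mul_comm γ, mul_assoc, Finset.sum_mul]
  apply mul_le_mul_of_nonneg_left _ (by positivity)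
  apply Finset.sum_le_sum
  intro i _
  have h1 : (0:ℝ) ≤ (1 + Real.exp ((inner ℝ (x i) w : ℝ)))⁻¹ := by positivity
  have h2 := hmargin i
  nlinarith

lemma risk_comparator_aux {d n : ℕ} (hn : 0 < n)
    (x : Fin n → EuclideanSpace ℝ (Fin d))
    (γ : ℝ) (hγ : 0 < γ) (wstar : EuclideanSpace ℝ (Fin d))
    (hmargin : ∀ i, γ ≤ (inner ℝ (x i) wstar : ℝ))
    (r : ℝ) (hr : 0 ≤ r) :
    logisticRisk x (r • wstar) ≤ Real.exp (-(γ * r)) := by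
  rw [logisticRisk, one_div]
  have hn' : (0:ℝ) < (n:ℝ) := by exact_mod_cast hn
  have hterm : ∀ i : Fin n,
      Real.log (1 + Real.exp (-(inner ℝ (x i) (r • wstar) : ℝ))) ≤ Real.exp (-(γ * r)) := by
    intro i
    have hsm : (inner ℝ (x i) (r • wstar) : ℝ) = r * (inner ℝ (x i) wstar : ℝ) :=
      real_inner_smul_right _ _ _
    apply pt_L_mono_aux
    rw [hsm]
    nlinarith [hmargin i]
  calc (n:ℝ)⁻¹ * ∑ i : Fin n, Real.log (1 + Real.exp (-(inner ℝ (x i) (r • wstar) : ℝ)))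
      ≤ (n:ℝ)⁻¹ * ∑ _i : Fin n, Real.exp (-(γ * r)) := by
        apply mul_le_mul_of_nonneg_left (Finset.sum_le_sum fun i _ => hterm i) (by positivity)
    _ = Real.exp (-(γ * r)) := by
        rw [Finset.sum_const]
        simp only [Finset.card_univ, Fintype.card_fin, nsmul_eq_mul]
        field_simp

lemma quad_bound_aux {N b q : ℝ} (hN0 : 0 ≤ N) (hb : 0 ≤ b) (hq : 0 ≤ q)
    (h : N ^ 2 ≤ b * N + q ^ 2) : N ≤ b + q := by
  nlinarith [mul_nonneg hb hq, mul_nonneg hb hN0, sq_nonneg (N - q)]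

/-- gradient potential bound via the perceptron argument. -/
theorem gd_gradient_potential_bound {d n : ℕ} (hn : 0 < n)
    (x : Fin n → EuclideanSpace ℝ (Fin d)) (hx : ∀ i, ‖x i‖ ≤ 1)
    (γ : ℝ) (hγ : 0 < γ) (wstar : EuclideanSpace ℝ (Fin d)) (hws : ‖wstar‖ = 1)
    (hmargin : ∀ i, γ ≤ (inner ℝ (x i) wstar : ℝ))
    (η : ℝ) (hη : 0 < η) (w : ℕ → EuclideanSpace ℝ (Fin d))
    (hw0 : w 0 = 0)
    (hgd : ∀ t, w (t + 1) = w t - η • logisticGrad x (w t))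
    (t : ℕ) (ht : 1 ≤ t) (hlarge : 1 ≤ γ ^ 2 * η * t) :
    (1 / t) * ∑ k ∈ Finset.range t, gradPotential x (w k)
        ≤ ‖w t - w 0‖ / (γ * η * t) ∧
    ‖w t - w 0‖ / (γ * η * t)
        ≤ (Real.sqrt 2 + 2 * Real.log (γ ^ 2 * η * t) + η) / (γ ^ 2 * η * t) := by
  have ht0 : (0:ℝ) < (t:ℝ) := by exact_mod_cast ht
  have hγηt : (0:ℝ) < γ * η * t := by positivity
  -- Step A': perceptron telescoping
  have hA' : ∀ T : ℕ, γ * η * ∑ k ∈ Finset.range T, gradPotential x (w k)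
      ≤ (inner ℝ (w T) wstar : ℝ) := by
    intro T
    induction T with
    | zero => simp [hw0]
    | succ T ih =>
      rw [Finset.sum_range_succ, hgd T, inner_sub_left, real_inner_smul_left]
      have hm := margin_inner_aux x γ wstar hmargin (w T)
      have : γ * gradPotential x (w T) * η ≤ -(inner ℝ (logisticGrad x (w T)) wstar : ℝ) * η := by
        apply mul_le_mul_of_nonneg_right hm hη.le
      nlinarith [ih]
  have hS0 : 0 ≤ ∑ k ∈ Finset.range t, gradPotential x (w k) :=
    Finset.sum_nonneg fun k _ => gradPotential_nonneg_aux x (w k)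
  have hCS : (inner ℝ (w t) wstar : ℝ) ≤ ‖w t‖ := by
    calc (inner ℝ (w t) wstar : ℝ) ≤ ‖w t‖ * ‖wstar‖ := real_inner_le_norm _ _
      _ = ‖w t‖ := by rw [hws, mul_one]
  have hAS : γ * η * ∑ k ∈ Finset.range t, gradPotential x (w k) ≤ ‖w t‖ :=
    (hA' t).trans hCS
  constructor
  · -- first conjunct
    rw [hw0, sub_zero]
    have heq : (1/(t:ℝ)) * ∑ k ∈ Finset.range t, gradPotential x (w k)
        = (γ * η * ∑ k ∈ Finset.range t, gradPotential x (w k)) / (γ * η * t) := by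
      field_simp
    rw [heq]
    exact (div_le_div_iff_of_pos_right hγηt).2 hAS
  · -- second conjunct
    obtain ⟨r, hrdef⟩ : ∃ r : ℝ, r = Real.log (γ ^ 2 * η * t) / γ := ⟨_, rfl⟩
    have hlog0 : 0 ≤ Real.log (γ ^ 2 * η * t) := Real.log_nonneg hlarge
    have hr0 : 0 ≤ r := by rw [hrdef]; positivity
    obtain ⟨u, hudef⟩ : ∃ u : EuclideanSpace ℝ (Fin d), u = r • wstar := ⟨_, rfl⟩
    -- one-step descent
    have hB : ∀ k : ℕ, ‖w (k+1) - u‖^2 ≤ ‖w k - u‖^2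
        + 2 * η * (logisticRisk x u - logisticRisk x (w k))
        + η^2 * gradPotential x (w k) := by
      intro k
      have hrw : w (k+1) - u = (w k - u) - η • logisticGrad x (w k) := by
        rw [hgd k]; abel
      rw [hrw, norm_sub_sq_real]
      have hip : (inner ℝ (w k - u) (η • logisticGrad x (w k)) : ℝ)
          = η * (inner ℝ (logisticGrad x (w k)) (w k - u) : ℝ) := by
        rw [real_inner_smul_right, real_inner_comm]
      have hcv := risk_convex_aux x (w k) u
      have hg := norm_logisticGrad_le_aux x hx (w k)
      have hg1 := gradPotential_le_one_aux hn x (w k)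
      have hg0 := gradPotential_nonneg_aux x (w k)
      have hgn := norm_nonneg (logisticGrad x (w k))
      have hsq : ‖logisticGrad x (w k)‖^2 ≤ gradPotential x (w k) := by
        nlinarith [mul_self_le_mul_self hgn hg, mul_nonneg hg0 (by linarith : (0:ℝ) ≤ 1 - gradPotential x (w k))]
      have hns : ‖η • logisticGrad x (w k)‖^2 ≤ η^2 * gradPotential x (w k) := by
        rw [norm_smul, mul_pow, Real.norm_eq_abs, sq_abs]
        nlinarith [sq_nonneg η]
      rw [hip]
      have hkey := mul_le_mul_of_nonneg_left hcv hη.le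
      linarith [hkey, hns]
    -- telescoping
    have hB' : ∀ T : ℕ, ‖w T - u‖^2 ≤ ‖w 0 - u‖^2
        + ∑ k ∈ Finset.range T, (2 * η * (logisticRisk x u - logisticRisk x (w k))
          + η^2 * gradPotential x (w k)) := by
      intro T
      induction T with
      | zero => simp
      | succ T ih =>
        rw [Finset.sum_range_succ]
        linarith [hB T, ih]
    -- bound the sum
    have hsum1 : ∑ k ∈ Finset.range t, (2 * η * (logisticRisk x u - logisticRisk x (w k))
          + η^2 * gradPotential x (w k))
        ≤ 2 * η * t * logisticRisk x u
          + η^2 * ∑ k ∈ Finset.range t, gradPotential x (w k) := by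
      rw [Finset.sum_add_distrib, ← Finset.mul_sum, ← Finset.mul_sum]
      have h1 : ∑ k ∈ Finset.range t, (logisticRisk x u - logisticRisk x (w k))
          ≤ (t:ℝ) * logisticRisk x u := by
        calc ∑ k ∈ Finset.range t, (logisticRisk x u - logisticRisk x (w k))
            ≤ ∑ _k ∈ Finset.range t, logisticRisk x u :=
              Finset.sum_le_sum fun k _ => by linarith [risk_nonneg_aux x (w k)]
          _ = (t:ℝ) * logisticRisk x u := by
              rw [Finset.sum_const, Finset.card_range, nsmul_eq_mul]
      have h2 := mul_le_mul_of_nonneg_left h1 (by positivity : (0:ℝ) ≤ 2 * η)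
      linarith
    -- norms with u = r • wstar
    have hnu : ‖u‖ = r := by
      rw [hudef, norm_smul, Real.norm_eq_abs, abs_of_nonneg hr0, hws, mul_one]
    have hw0u : ‖w 0 - u‖ = r := by rw [hw0, zero_sub, norm_neg, hnu]
    have hwtu : ‖w t - u‖^2 = ‖w t‖^2 - 2 * r * (inner ℝ (w t) wstar : ℝ) + r^2 := by
      rw [norm_sub_sq_real, hnu, hudef, real_inner_smul_right]; ring
    -- risk at comparator
    have hLu : logisticRisk x u ≤ Real.exp (-(γ * r)) := by
      rw [hudef]
      exact risk_comparator_aux hn x γ hγ wstar hmargin r hr0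
    have hexp : Real.exp (-(γ * r)) = (γ ^ 2 * η * t)⁻¹ := by
      rw [hrdef]
      rw [show γ * (Real.log (γ ^ 2 * η * ↑t) / γ) = Real.log (γ ^ 2 * η * ↑t) by
        field_simp]
      rw [Real.exp_neg, Real.exp_log (by positivity)]
    have hLu' : 2 * η * t * logisticRisk x u ≤ 2 / γ^2 := by
      have hL0 := risk_nonneg_aux x u
      calc 2 * η * (t:ℝ) * logisticRisk x u ≤ 2 * η * t * (γ ^ 2 * η * t)⁻¹ := by
            apply mul_le_mul_of_nonneg_left (hLu.trans_eq hexp) (by positivity)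
        _ = 2 / γ^2 := by field_simp
    -- η² Σ G ≤ (η/γ) ‖w t‖
    have hGS : η^2 * ∑ k ∈ Finset.range t, gradPotential x (w k) ≤ (η / γ) * ‖w t‖ := by
      have h2 := mul_le_mul_of_nonneg_left hAS (by positivity : (0:ℝ) ≤ η / γ)
      calc η^2 * ∑ k ∈ Finset.range t, gradPotential x (w k)
          = (η / γ) * (γ * η * ∑ k ∈ Finset.range t, gradPotential x (w k)) := by
            field_simp
        _ ≤ (η / γ) * ‖w t‖ := h2
    -- combine
    have hN : ‖w t‖^2 ≤ (2 * r + η / γ) * ‖w t‖ + 2 / γ^2 := by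
      have h1 : ‖w t‖^2 - 2 * r * (inner ℝ (w t) wstar : ℝ) + r^2
          ≤ r^2 + 2 / γ^2 + (η / γ) * ‖w t‖ := by
        rw [← hwtu]
        have h2 := (hB' t).trans (by linarith [hsum1] :
          ‖w 0 - u‖^2 + ∑ k ∈ Finset.range t,
              (2 * η * (logisticRisk x u - logisticRisk x (w k))
                + η^2 * gradPotential x (w k))
            ≤ ‖w 0 - u‖^2 + (2 * η * t * logisticRisk x u
                + η^2 * ∑ k ∈ Finset.range t, gradPotential x (w k)))
        rw [hw0u] at h2
        linarith [hLu', hGS, h2]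
      linarith [h1, mul_le_mul_of_nonneg_left hCS (by positivity : (0:ℝ) ≤ 2 * r)]
    -- conclude ‖w t‖ ≤ 2r + η/γ + √2/γ
    have hs2 : Real.sqrt 2 ^ 2 = 2 := Real.sq_sqrt (by norm_num)
    have hq2 : (Real.sqrt 2 / γ)^2 = 2 / γ^2 := by rw [div_pow, hs2]
    have hNb : ‖w t‖ ≤ 2 * r + η / γ + Real.sqrt 2 / γ := by
      apply quad_bound_aux (norm_nonneg _) (by positivity) (by positivity)
      rw [hq2]
      exact hN
    -- final division
    rw [hw0, sub_zero]
    have hfin : ‖w t‖ ≤ (Real.sqrt 2 + 2 * Real.log (γ ^ 2 * η * t) + η) / γ := by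
      rw [hrdef] at hNb
      calc ‖w t‖ ≤ 2 * (Real.log (γ ^ 2 * η * ↑t) / γ) + η / γ + Real.sqrt 2 / γ := hNb
        _ = (Real.sqrt 2 + 2 * Real.log (γ ^ 2 * η * t) + η) / γ := by
            field_simp
            ring
    calc ‖w t‖ / (γ * η * t)
        ≤ ((Real.sqrt 2 + 2 * Real.log (γ ^ 2 * η * t) + η) / γ) / (γ * η * t) :=
          (div_le_div_iff_of_pos_right hγηt).2 hfin
      _ = (Real.sqrt 2 + 2 * Real.log (γ ^ 2 * η * t) + η) / (γ ^ 2 * η * t) := by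
          rw [div_div]
          congr 1
          ring
end

section
/- (Log-loss is 1-smooth in logarithm.) For L(w) = (1/n) Σᵢ ln(1 + exp(−xᵢᵀw)) with ‖xᵢ‖ ≤ 1, the function w ↦ ln L(w) has Hessian bounded above by the identity: ∇² ln L(w) ⪯ I for all w. -/
open Finset

noncomputable def gls (t : ℝ) : ℝ := Real.log (1 + Real.exp (-t))
noncomputable def gls' (t : ℝ) : ℝ := -(1 + Real.exp t)⁻¹
noncomputable def gls'' (t : ℝ) : ℝ := Real.exp t * ((1 + Real.exp t) ^ 2)⁻¹

lemma one_add_exp_pos (t : ℝ) : 0 < 1 + Real.exp t := by positivity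

lemma hasDerivAt_gls (t : ℝ) : HasDerivAt gls (gls' t) t := by
  have h1 : HasDerivAt (fun s : ℝ => 1 + Real.exp (-s)) (-Real.exp (-t)) t := by
    simpa using ((Real.hasDerivAt_exp (-t)).comp t (hasDerivAt_neg t)).const_add 1
  have h2 := (Real.hasDerivAt_log (ne_of_gt (one_add_exp_pos (-t)))).comp t h1
  refine h2.congr_deriv ?_
  rw [gls']
  have he := Real.exp_ne_zero t
  field_simp [Real.exp_neg]
  rw [mul_add, ← Real.exp_add, neg_add_cancel, Real.exp_zero]; ring

lemma hasDerivAt_gls' (t : ℝ) : HasDerivAt gls' (gls'' t) t := by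
  have h1 : HasDerivAt (fun s : ℝ => 1 + Real.exp s) (Real.exp t) t := by
    simpa using (Real.hasDerivAt_exp t).const_add 1
  have h2 := (h1.inv (ne_of_gt (one_add_exp_pos t))).neg
  refine h2.congr_deriv ?_
  rw [gls'']
  field_simp

lemma gls_pos (t : ℝ) : 0 < gls t := by
  rw [gls]
  have : (1:ℝ) < 1 + Real.exp (-t) := by linarith [Real.exp_pos (-t)]
  exact Real.log_pos this

lemma gls''_nonneg (t : ℝ) : 0 ≤ gls'' t := by rw [gls'']; positivity

lemma gls''_le_gls (t : ℝ) : gls'' t ≤ gls t := by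
  have hp := one_add_exp_pos t
  have hq := one_add_exp_pos (-t)
  have h1 : gls'' t ≤ (1 + Real.exp t)⁻¹ := by
    rw [gls'']
    rw [sq]
    rw [mul_inv]
    rw [← mul_assoc]
    have : Real.exp t * (1 + Real.exp t)⁻¹ ≤ 1 := by
      rw [mul_inv_le_iff₀ hp]; linarith
    calc Real.exp t * (1 + Real.exp t)⁻¹ * (1 + Real.exp t)⁻¹
        ≤ 1 * (1 + Real.exp t)⁻¹ := by
          apply mul_le_mul_of_nonneg_right this (by positivity)
      _ = (1 + Real.exp t)⁻¹ := one_mul _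
  have h2 : (1 + Real.exp t)⁻¹ ≤ gls t := by
    rw [gls]
    have hlog := Real.log_le_sub_one_of_pos (x := (1 + Real.exp (-t))⁻¹) (by positivity)
    rw [Real.log_inv] at hlog
    have : 1 - (1 + Real.exp (-t))⁻¹ ≤ Real.log (1 + Real.exp (-t)) := by linarith
    refine le_trans ?_ this
    rw [le_sub_iff_add_le]
    have key : (1 + Real.exp t)⁻¹ + (1 + Real.exp (-t))⁻¹ = 1 := by
      have he := Real.exp_ne_zero t
      rw [Real.exp_neg]
      field_simp
      ring
    linarith [key.le]
  linarith

section Main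

variable {d n : ℕ} (x : Fin n → EuclideanSpace ℝ (Fin d))

noncomputable def LD1 (w : EuclideanSpace ℝ (Fin d)) :
    EuclideanSpace ℝ (Fin d) →L[ℝ] ℝ :=
  (1 / (n:ℝ)) • ∑ i, gls' ((inner ℝ (x i) w : ℝ)) • innerSL ℝ (x i)

noncomputable def LD2 (w : EuclideanSpace ℝ (Fin d)) :
    EuclideanSpace ℝ (Fin d) →L[ℝ] EuclideanSpace ℝ (Fin d) →L[ℝ] ℝ :=
  (1 / (n:ℝ)) • ∑ i,
    ((gls'' ((inner ℝ (x i) w : ℝ)) • innerSL ℝ (x i)).smulRight (innerSL ℝ (x i)))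

lemma logisticRisk_eq (w : EuclideanSpace ℝ (Fin d)) :
    logisticRisk x w = (1 / n) * ∑ i, gls ((inner ℝ (x i) w : ℝ)) := rfl

lemma hasFDerivAt_term (i : Fin n) (w : EuclideanSpace ℝ (Fin d)) :
    HasFDerivAt (fun u => gls ((inner ℝ (x i) u : ℝ)))
      (gls' ((inner ℝ (x i) w : ℝ)) • innerSL ℝ (x i)) w := by
  have h := (hasDerivAt_gls ((inner ℝ (x i) w : ℝ))).comp_hasFDerivAt w
    (innerSL ℝ (x i)).hasFDerivAt
  exact h

lemma hasFDerivAt_L (w : EuclideanSpace ℝ (Fin d)) :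
    HasFDerivAt (logisticRisk x) (LD1 x w) w := by
  have hsum : HasFDerivAt (fun u => ∑ i, gls ((inner ℝ (x i) u : ℝ)))
      (∑ i, gls' ((inner ℝ (x i) w : ℝ)) • innerSL ℝ (x i)) w :=
    HasFDerivAt.fun_sum fun i _ => hasFDerivAt_term x i w
  have h := hsum.const_mul (1 / (n:ℝ))
  exact h

lemma hasFDerivAt_LD1 (w : EuclideanSpace ℝ (Fin d)) :
    HasFDerivAt (LD1 x) (LD2 x w) w := by
  have hsum : HasFDerivAt
      (fun u => ∑ i, gls' ((inner ℝ (x i) u : ℝ)) • innerSL ℝ (x i))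
      (∑ i, ((gls'' ((inner ℝ (x i) w : ℝ)) • innerSL ℝ (x i)).smulRight (innerSL ℝ (x i)))) w := by
    apply HasFDerivAt.fun_sum
    intro i _
    have hc : HasFDerivAt (fun u => gls' ((inner ℝ (x i) u : ℝ)))
        (gls'' ((inner ℝ (x i) w : ℝ)) • innerSL ℝ (x i)) w :=
      (hasDerivAt_gls' _).comp_hasFDerivAt w (innerSL ℝ (x i)).hasFDerivAt
    have := hc.smul (hasFDerivAt_const (innerSL ℝ (x i)) w)
    exact (this : HasFDerivAt (fun y => gls' (inner ℝ (x i) y) • innerSL ℝ (x i)) _ w).congr_fderiv (by simp)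
  exact hsum.const_smul (1 / (n:ℝ))

end Main

/-- the logarithm of the logistic risk is 1-smooth: ∇² ln L(w) ⪯ I. -/
theorem log_logistic_risk_one_smooth {d n : ℕ} (hn : 0 < n)
    (x : Fin n → EuclideanSpace ℝ (Fin d)) (hx : ∀ i, ‖x i‖ ≤ 1)
    (w v : EuclideanSpace ℝ (Fin d)) :
    (iteratedFDeriv ℝ 2 (fun u => Real.log (logisticRisk x u)) w) ![v, v]
      ≤ ‖v‖ ^ 2 := by
  have hL : ∀ u, 0 < logisticRisk x u := by
    intro u
    rw [logisticRisk_eq]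
    have : (0:ℝ) < ∑ i, gls ((inner ℝ (x i) u : ℝ)) :=
      Finset.sum_pos (fun i _ => gls_pos _) (univ_nonempty_iff.2 ⟨⟨0, hn⟩⟩)
    have hn' : (0:ℝ) < 1 / n := by positivity
    positivity
  -- first derivative of log ∘ L
  have hlog : ∀ u, HasFDerivAt (fun u => Real.log (logisticRisk x u))
      ((logisticRisk x u)⁻¹ • LD1 x u) u := fun u =>
    (Real.hasDerivAt_log (hL u).ne').comp_hasFDerivAt u (hasFDerivAt_L x u)
  have hfd : fderiv ℝ (fun u => Real.log (logisticRisk x u))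
      = fun u => (logisticRisk x u)⁻¹ • LD1 x u := funext fun u => (hlog u).fderiv
  -- second derivative
  set Lw := logisticRisk x w with hLw
  have hinv : HasFDerivAt (fun u => (logisticRisk x u)⁻¹)
      ((-(Lw ^ 2)⁻¹) • LD1 x w) w :=
    (hasDerivAt_inv (hL w).ne').comp_hasFDerivAt w (hasFDerivAt_L x w)
  have hD : HasFDerivAt (fun u => (logisticRisk x u)⁻¹ • LD1 x u)
      (Lw⁻¹ • LD2 x w + ((-(Lw ^ 2)⁻¹) • LD1 x w).smulRight (LD1 x w)) w :=
    hinv.smul (hasFDerivAt_LD1 x w)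
  have key : (iteratedFDeriv ℝ 2 (fun u => Real.log (logisticRisk x u)) w) ![v, v]
      = Lw⁻¹ * (LD2 x w v v) + (-(Lw ^ 2)⁻¹ * (LD1 x w v)) * (LD1 x w v) := by
    rw [iteratedFDeriv_two_apply, hfd, hD.fderiv]
    simp [ContinuousLinearMap.smulRight_apply]
  rw [key]
  -- bound each term
  have h2 : (-(Lw ^ 2)⁻¹ * (LD1 x w v)) * (LD1 x w v) ≤ 0 := by
    have : (0:ℝ) ≤ (Lw ^ 2)⁻¹ * (LD1 x w v) ^ 2 := by positivity
    nlinarith [this]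
  have h1 : Lw⁻¹ * (LD2 x w v v) ≤ ‖v‖ ^ 2 := by
    have hterm : ∀ i : Fin n, gls'' ((inner ℝ (x i) w : ℝ)) * ((inner ℝ (x i) v : ℝ) * (inner ℝ (x i) v : ℝ))
        ≤ gls ((inner ℝ (x i) w : ℝ)) * ‖v‖ ^ 2 := by
      intro i
      have hip : ((inner ℝ (x i) v : ℝ)) * ((inner ℝ (x i) v : ℝ)) ≤ ‖v‖ ^ 2 := by
        have := abs_real_inner_le_norm (x i) v
        have h1 : |(inner ℝ (x i) v : ℝ)| ≤ ‖v‖ :=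
          this.trans (by nlinarith [hx i, norm_nonneg v])
        nlinarith [abs_nonneg ((inner ℝ (x i) v : ℝ)), le_abs_self ((inner ℝ (x i) v : ℝ)),
          neg_abs_le ((inner ℝ (x i) v : ℝ))]
      have hsqnn : (0:ℝ) ≤ ((inner ℝ (x i) v : ℝ)) * ((inner ℝ (x i) v : ℝ)) := mul_self_nonneg _
      exact mul_le_mul (gls''_le_gls _) hip hsqnn (gls_pos _).le
    have hLD2 : LD2 x w v v = (1 / (n:ℝ)) * ∑ i,
        gls'' ((inner ℝ (x i) w : ℝ)) * ((inner ℝ (x i) v : ℝ) * (inner ℝ (x i) v : ℝ)) := by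
      simp [LD2, ContinuousLinearMap.smulRight_apply, mul_assoc]
    have hbound : LD2 x w v v ≤ Lw * ‖v‖ ^ 2 := by
      rw [hLD2, hLw, logisticRisk_eq, mul_assoc (1 / (n:ℝ)), Finset.sum_mul]
      have hn' : (0:ℝ) ≤ 1 / n := by positivity
      apply mul_le_mul_of_nonneg_left _ hn'
      exact Finset.sum_le_sum fun i _ => hterm i
    calc Lw⁻¹ * (LD2 x w v v) ≤ Lw⁻¹ * (Lw * ‖v‖ ^ 2) := by
          apply mul_le_mul_of_nonneg_left hbound (inv_nonneg.2 (hL w).le)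
      _ = ‖v‖ ^ 2 := inv_mul_cancel_left₀ (hL w).ne' _
  linarith
end

section
/- (Stable phase: monotone descent under small loss.) For GD on logistic regression with ‖xᵢ‖ ≤ 1 and any stepsize η > 0, if at some step s the loss satisfies L(w_s) ≤ 2/η, then L(w_t) is non-increasing for all t ≥ s. Specifically, the one-step inequality ln L(w_{t+1}) ≤ ln L(w_t) − η(1/L(w_t) − η/2)‖∇L(w_t)‖² holds. -/
open Finset

noncomputable def lgt (s : ℝ) : ℝ := Real.log (1 + Real.exp (-s))
noncomputable def lgt' (s : ℝ) : ℝ := -(1 + Real.exp s)⁻¹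
noncomputable def lgt'' (s : ℝ) : ℝ := Real.exp s / (1 + Real.exp s) ^ 2

lemma lgt_pos (s : ℝ) : 0 < lgt s :=
  Real.log_pos (by linarith [Real.exp_pos (-s)])

lemma hasDerivAt_lgt (s : ℝ) : HasDerivAt lgt (lgt' s) s := by
  have h1 : HasDerivAt (fun s : ℝ => 1 + Real.exp (-s)) (-Real.exp (-s)) s := by
    simpa using ((Real.hasDerivAt_exp (-s)).comp s (hasDerivAt_neg s)).const_add 1
  have h2 := (Real.hasDerivAt_log (by positivity : (1 + Real.exp (-s)) ≠ 0)).comp s h1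
  refine h2.congr_deriv ?_
  unfold lgt'
  rw [Real.exp_neg]
  have h := (Real.exp_pos s).ne'
  field_simp
  ring

lemma hasDerivAt_lgt' (s : ℝ) : HasDerivAt lgt' (lgt'' s) s := by
  have h1 : HasDerivAt (fun s : ℝ => 1 + Real.exp s) (Real.exp s) s := by
    simpa using (Real.hasDerivAt_exp s).const_add 1
  have h2 := (h1.inv (by positivity)).neg
  refine h2.congr_deriv ?_
  unfold lgt''
  field_simp

lemma lgt''_nonneg (s : ℝ) : 0 ≤ lgt'' s := by unfold lgt''; positivity

lemma lgt''_le_lgt (s : ℝ) : lgt'' s ≤ lgt s := by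
  have he : (0:ℝ) < Real.exp s := Real.exp_pos s
  have h1 : lgt'' s ≤ (1 + Real.exp s)⁻¹ := by
    unfold lgt''
    rw [inv_eq_one_div, div_le_div_iff₀ (by positivity) (by positivity)]
    nlinarith
  have h2 : (1 + Real.exp s)⁻¹ ≤ lgt s := by
    have hp : (0:ℝ) < 1 + Real.exp (-s) := by positivity
    have := Real.log_le_sub_one_of_pos (show (0:ℝ) < (1 + Real.exp (-s))⁻¹ by positivity)
    rw [Real.log_inv] at this
    have hle : 1 - (1 + Real.exp (-s))⁻¹ ≤ lgt s := by unfold lgt; linarith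
    have heq : (1 + Real.exp s)⁻¹ = 1 - (1 + Real.exp (-s))⁻¹ := by
      rw [Real.exp_neg]
      have h := (Real.exp_pos s).ne'
      field_simp
      ring
    linarith [heq ▸ hle]
  linarith

lemma taylor_le_of_deriv2_le {φ φ' φ'' : ℝ → ℝ} {c : ℝ}
    (hφ : ∀ τ, HasDerivAt φ (φ' τ) τ)
    (hφ' : ∀ τ, HasDerivAt φ' (φ'' τ) τ)
    (hc : ∀ τ, φ'' τ ≤ c) :
    φ 1 ≤ φ 0 + φ' 0 + c / 2 := by
  set ψ : ℝ → ℝ := fun τ => φ 0 + τ * φ' 0 + c * τ ^ 2 / 2 - φ τ with hψ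
  have hψd : ∀ τ, HasDerivAt ψ (φ' 0 + c * τ - φ' τ) τ := by
    intro τ
    have h1 : HasDerivAt (fun τ : ℝ => φ 0 + τ * φ' 0 + c * τ ^ 2 / 2 - φ τ)
        (φ' 0 + c * τ - φ' τ) τ := by
      have ha : HasDerivAt (fun τ : ℝ => τ * φ' 0) (φ' 0) τ := by
        simpa using (hasDerivAt_id τ).mul_const (φ' 0)
      have hb : HasDerivAt (fun τ : ℝ => c * τ ^ 2 / 2) (c * τ) τ := by
        have := ((hasDerivAt_pow 2 τ).const_mul c).div_const 2
        simpa using this.congr_deriv (by ring)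
      exact (((ha.const_add (φ 0)).add hb).sub (hφ τ)).congr_deriv (by ring)
    exact h1
  set ψ' : ℝ → ℝ := fun τ => φ' 0 + c * τ - φ' τ with hψ'
  have hψ'd : ∀ τ, HasDerivAt ψ' (c - φ'' τ) τ := by
    intro τ
    have ha : HasDerivAt (fun τ : ℝ => c * τ) c τ := by
      simpa using (hasDerivAt_id τ).const_mul c
    exact ((ha.const_add (φ' 0)).sub (hφ' τ)).congr_deriv (by ring)
  have hmono' : Monotone ψ' := by
    apply monotone_of_deriv_nonneg
    · exact fun τ => (hψ'd τ).differentiableAt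
    · intro τ
      rw [(hψ'd τ).deriv]
      linarith [hc τ]
  have hψ'0 : ψ' 0 = 0 := by simp [hψ']
  have hmono : MonotoneOn ψ (Set.Ici 0) := by
    apply monotoneOn_of_deriv_nonneg (convex_Ici 0)
    · exact Continuous.continuousOn (by
        have : Differentiable ℝ ψ := fun τ => (hψd τ).differentiableAt
        exact this.continuous)
    · exact fun τ _ => (hψd τ).differentiableAt.differentiableWithinAt
    · intro τ hτ
      rw [(hψd τ).deriv]
      have : ψ' 0 ≤ ψ' τ := hmono' (le_of_lt (by simpa using hτ))
      rw [hψ'0] at this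
      simpa [hψ'] using this
  have h01 : ψ 0 ≤ ψ 1 := hmono (by norm_num) (by norm_num) (by norm_num)
  simp only [hψ] at h01
  nlinarith [h01]

lemma logisticRisk_eq_lgt {d n : ℕ} (x : Fin n → EuclideanSpace ℝ (Fin d))
    (w : EuclideanSpace ℝ (Fin d)) :
    logisticRisk x w = (1 / n) * ∑ i, lgt (inner ℝ (x i) w : ℝ) := rfl

lemma logisticRisk_pos {d n : ℕ} (hn : 0 < n) (x : Fin n → EuclideanSpace ℝ (Fin d))
    (w : EuclideanSpace ℝ (Fin d)) : 0 < logisticRisk x w := by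
  rw [logisticRisk_eq_lgt]
  have h1 : (0:ℝ) < 1 / n := by positivity
  have hne : (Finset.univ : Finset (Fin n)).Nonempty :=
    Finset.univ_nonempty_iff.mpr (Fin.pos_iff_nonempty.mp hn)
  have h2 : (0:ℝ) < ∑ i, lgt (inner ℝ (x i) w : ℝ) :=
    Finset.sum_pos (fun i _ => lgt_pos _) hne
  exact mul_pos h1 h2

lemma key_smooth {d n : ℕ} (hn : 0 < n) (x : Fin n → EuclideanSpace ℝ (Fin d))
    (hx : ∀ i, ‖x i‖ ≤ 1) (w v : EuclideanSpace ℝ (Fin d)) :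
    Real.log (logisticRisk x (w + v)) ≤ Real.log (logisticRisk x w)
      + (inner ℝ (logisticGrad x w) v : ℝ) / logisticRisk x w + ‖v‖ ^ 2 / 2 := by
  set a : Fin n → ℝ := fun i => (inner ℝ (x i) w : ℝ) with ha
  set b : Fin n → ℝ := fun i => (inner ℝ (x i) v : ℝ) with hb
  have hb_sq : ∀ i, (b i) ^ 2 ≤ ‖v‖ ^ 2 := by
    intro i
    have h1 : |b i| ≤ ‖x i‖ * ‖v‖ := abs_real_inner_le_norm (x i) v
    have h2 : ‖x i‖ * ‖v‖ ≤ ‖v‖ := by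
      have := hx i
      nlinarith [norm_nonneg v, norm_nonneg (x i)]
    calc (b i) ^ 2 = |b i| ^ 2 := (sq_abs _).symm
      _ ≤ ‖v‖ ^ 2 := by nlinarith [abs_nonneg (b i)]
  set h : ℝ → ℝ := fun τ => (1 / n) * ∑ i, lgt (a i + τ * b i) with hh
  set h' : ℝ → ℝ := fun τ => (1 / n) * ∑ i, lgt' (a i + τ * b i) * b i with hh'
  set h'' : ℝ → ℝ := fun τ => (1 / n) * ∑ i, lgt'' (a i + τ * b i) * (b i) ^ 2 with hh''
  have haff : ∀ (i : Fin n) (τ : ℝ), HasDerivAt (fun τ : ℝ => a i + τ * b i) (b i) τ := by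
    intro i τ
    simpa using ((hasDerivAt_id τ).mul_const (b i)).const_add (a i)
  have hhd : ∀ τ, HasDerivAt h (h' τ) τ := by
    intro τ
    apply HasDerivAt.const_mul
    exact HasDerivAt.fun_sum fun i _ => ((hasDerivAt_lgt (a i + τ * b i)).comp τ (haff i τ) :
      HasDerivAt (lgt ∘ fun τ => a i + τ * b i) _ τ)
  have hh'd : ∀ τ, HasDerivAt h' (h'' τ) τ := by
    intro τ
    apply HasDerivAt.const_mul
    apply HasDerivAt.fun_sum
    intro i _
    have := ((hasDerivAt_lgt' (a i + τ * b i)).comp τ (haff i τ)).mul_const (b i)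
    simpa [sq, mul_assoc] using this
  have hhpos : ∀ τ, 0 < h τ := by
    intro τ
    have h1 : (0:ℝ) < 1 / n := by positivity
    have hne : (Finset.univ : Finset (Fin n)).Nonempty :=
      Finset.univ_nonempty_iff.mpr (Fin.pos_iff_nonempty.mp hn)
    have h2 : (0:ℝ) < ∑ i, lgt (a i + τ * b i) :=
      Finset.sum_pos (fun i _ => lgt_pos _) hne
    exact mul_pos h1 h2
  -- h'' ≤ ‖v‖² h
  have hbound : ∀ τ, h'' τ ≤ ‖v‖ ^ 2 * h τ := by
    intro τ
    show (1/n : ℝ) * ∑ i, lgt'' (a i + τ * b i) * (b i)^2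
        ≤ ‖v‖^2 * ((1/n : ℝ) * ∑ i, lgt (a i + τ * b i))
    rw [show ‖v‖^2 * ((1/n : ℝ) * ∑ i, lgt (a i + τ * b i))
        = (1/n : ℝ) * ∑ i, ‖v‖^2 * lgt (a i + τ * b i) by
          simp only [Finset.mul_sum]; exact Finset.sum_congr rfl fun i _ => by ring]
    apply mul_le_mul_of_nonneg_left _ (by positivity : (0:ℝ) ≤ 1 / n)
    apply Finset.sum_le_sum
    intro i _
    have h1 := lgt''_le_lgt (a i + τ * b i)
    have h2 := hb_sq i
    have h3 := lgt''_nonneg (a i + τ * b i)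
    have h4 := (lgt_pos (a i + τ * b i)).le
    nlinarith
  -- φ = log ∘ h
  set φ : ℝ → ℝ := fun τ => Real.log (h τ) with hφ
  set φ' : ℝ → ℝ := fun τ => h' τ / h τ with hφ'
  set φ'' : ℝ → ℝ := fun τ => (h'' τ * h τ - h' τ * h' τ) / (h τ) ^ 2 with hφ''
  have hφd : ∀ τ, HasDerivAt φ (φ' τ) τ := fun τ =>
    ((Real.hasDerivAt_log (hhpos τ).ne').comp τ (hhd τ)).congr_deriv (by rw [hφ']; ring)
  have hφ'd : ∀ τ, HasDerivAt φ' (φ'' τ) τ := by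
    intro τ
    exact (hh'd τ).div (hhd τ) (hhpos τ).ne'
  have hφ''le : ∀ τ, φ'' τ ≤ ‖v‖ ^ 2 := by
    intro τ
    rw [hφ'']
    have hp := hhpos τ
    rw [div_le_iff₀ (pow_pos hp 2)]
    nlinarith [hbound τ, sq_nonneg (h' τ)]
  have htay := taylor_le_of_deriv2_le hφd hφ'd hφ''le
  -- identify endpoints
  have he1 : h 1 = logisticRisk x (w + v) := by
    rw [logisticRisk_eq_lgt]
    show (1/n : ℝ) * ∑ i, lgt (a i + 1 * b i) = _
    refine congrArg _ (Finset.sum_congr rfl fun i _ => congrArg lgt ?_)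
    simp [ha, hb, inner_add_right]
  have he0 : h 0 = logisticRisk x w := by
    rw [logisticRisk_eq_lgt]
    show (1/n : ℝ) * ∑ i, lgt (a i + 0 * b i) = _
    refine congrArg _ (Finset.sum_congr rfl fun i _ => congrArg lgt ?_)
    simp [ha]
  have hg : h' 0 = (inner ℝ (logisticGrad x w) v : ℝ) := by
    show (1/n : ℝ) * ∑ i, lgt' (a i + 0 * b i) * b i = _
    rw [logisticGrad, real_inner_smul_left, sum_inner, one_div]
    refine congrArg _ (Finset.sum_congr rfl fun i _ => ?_)
    rw [real_inner_smul_left]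
    simp [lgt', ha, hb]
  simp only [hφ, hφ'] at htay
  rw [he1, he0, hg] at htay
  linarith [htay]

/-- stable phase: monotone descent once the loss is below 2/η,
together with the one-step log-loss descent inequality. -/
theorem gd_stable_phase_descent {d n : ℕ} (hn : 0 < n)
    (x : Fin n → EuclideanSpace ℝ (Fin d)) (hx : ∀ i, ‖x i‖ ≤ 1)
    (γ : ℝ) (hγ : 0 < γ) (wstar : EuclideanSpace ℝ (Fin d)) (hws : ‖wstar‖ = 1)
    (hmargin : ∀ i, γ ≤ (inner ℝ (x i) wstar : ℝ))
    (η : ℝ) (hη : 0 < η) (w : ℕ → EuclideanSpace ℝ (Fin d))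
    (hw0 : w 0 = 0)
    (hgd : ∀ t, w (t + 1) = w t - η • logisticGrad x (w t))
    (s : ℕ) (hs : logisticRisk x (w s) ≤ 2 / η) :
    (∀ t, Real.log (logisticRisk x (w (t + 1)))
        ≤ Real.log (logisticRisk x (w t))
          - η * (1 / logisticRisk x (w t) - η / 2) * ‖logisticGrad x (w t)‖ ^ 2) ∧
    (∀ t, s ≤ t → logisticRisk x (w (t + 1)) ≤ logisticRisk x (w t)) := by
  have hpos : ∀ u, 0 < logisticRisk x u := logisticRisk_pos hn x
  have part1 : ∀ t, Real.log (logisticRisk x (w (t + 1)))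
      ≤ Real.log (logisticRisk x (w t))
        - η * (1 / logisticRisk x (w t) - η / 2) * ‖logisticGrad x (w t)‖ ^ 2 := by
    intro t
    set g := logisticGrad x (w t) with hgdef
    set v : EuclideanSpace ℝ (Fin d) := -(η • g) with hv
    have hwt : w (t + 1) = w t + v := by rw [hgd t, hv, sub_eq_add_neg]
    have hkey := key_smooth hn x hx (w t) v
    rw [← hwt] at hkey
    have hinner : (inner ℝ g v : ℝ) = -(η * ‖g‖ ^ 2) := by
      rw [hv, inner_neg_right, real_inner_smul_right, real_inner_self_eq_norm_sq]
    have hnv : ‖v‖ ^ 2 = η ^ 2 * ‖g‖ ^ 2 := by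
      rw [hv, norm_neg, norm_smul, Real.norm_eq_abs, abs_of_pos hη, mul_pow]
    rw [hinner, hnv] at hkey
    have : Real.log (logisticRisk x (w t)) + -(η * ‖g‖ ^ 2) / logisticRisk x (w t)
        + η ^ 2 * ‖g‖ ^ 2 / 2
        = Real.log (logisticRisk x (w t))
          - η * (1 / logisticRisk x (w t) - η / 2) * ‖g‖ ^ 2 := by ring
    linarith [hkey, this.symm.le]
  refine ⟨part1, ?_⟩
  have step : ∀ t, logisticRisk x (w t) ≤ 2 / η →
      logisticRisk x (w (t + 1)) ≤ logisticRisk x (w t) := by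
    intro t ht
    have hL := hpos (w t)
    have hmul : logisticRisk x (w t) * η ≤ 2 := (le_div_iff₀ hη).mp ht
    have hfrac : η / 2 ≤ 1 / logisticRisk x (w t) := by
      rw [div_le_div_iff₀ (by norm_num) hL]
      nlinarith
    have hnn : 0 ≤ η * (1 / logisticRisk x (w t) - η / 2) * ‖logisticGrad x (w t)‖ ^ 2 := by
      have h1 : 0 ≤ 1 / logisticRisk x (w t) - η / 2 := by linarith
      positivity
    have hlog : Real.log (logisticRisk x (w (t + 1)))
        ≤ Real.log (logisticRisk x (w t)) := by linarith [part1 t]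
    exact (Real.log_le_log_iff (hpos _) (hpos _)).mp hlog
  intro t hst
  have hinv : ∀ u, s ≤ u → logisticRisk x (w u) ≤ 2 / η := by
    intro u hu
    induction u, hu using Nat.le_induction with
    | base => exact hs
    | succ m hm ih => exact le_trans (step m ih) ih
  exact step t (hinv t hst)
end
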